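/- There exists a prediction space in which the predictive distribution F takes finitely many values that are continuous, strictly increasing CDFs on a shared support interval, such that F is both probabilistically calibrated and marginally calibrated, yet fails to be threshold calibrated (and hence fails to be auto-calibrated). In particular, joint probabilistic and marginal calibration does not imply auto-calibration. -/

import Mathlib

open MeasureTheory ProbabilityTheory

noncomputable section

/-- The cumulative distribution function of a measure `G` on `ℝ`, evaluated at `y`. -/
def cdfAt (G : Measure ℝ) (y : ℝ) : ℝ := (G (Set.Iic y)).toReal

/-- The left limit `G(y−)` of the CDF of `G` at `y`. -/
def cdfLt (G : Measure ℝ) (y : ℝ) : ℝ := (G (Set.Iio y)).toReal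

/-- The lower `α`-quantile `q_α^-(G) = inf {x : G(x) ≥ α}`. -/
def lowerQuantile (G : Measure ℝ) (α : ℝ) : ℝ := sInf {x : ℝ | α ≤ cdfAt G x}

/-- The upper `α`-quantile `q_α^+(G) = sup {x : G(x−) ≤ α}`. -/
def upperQuantile (G : Measure ℝ) (α : ℝ) : ℝ := sSup {x : ℝ | cdfLt G x ≤ α}

variable {Ω : Type*} [MeasurableSpace Ω]

/-- The (randomized) probability integral transform `Z_F = F(Y−) + U (F(Y) − F(Y−))`. -/
def PIT (F : Ω → Measure ℝ) (Y U : Ω → ℝ) (ω : Ω) : ℝ :=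
  cdfLt (F ω) (Y ω) + U ω * (cdfAt (F ω) (Y ω) - cdfLt (F ω) (Y ω))

/-- The uniform distribution on `[0,1]`. -/
def unif01 : Measure ℝ := volume.restrict (Set.Icc (0:ℝ) 1)

/-- A prediction space: a probability space carrying a random probability measure `F` on `ℝ`
(the predictive distribution), an outcome `Y`, and a uniform random variable `U` that is
independent of the σ-algebra generated by `F` and `Y`. -/
structure IsPredictionSpace (μ : Measure Ω) (F : Ω → Measure ℝ) (Y U : Ω → ℝ) : Prop where
  isProb : IsProbabilityMeasure μ
  probF : ∀ ω, IsProbabilityMeasure (F ω)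
  measF : Measurable F
  measY : Measurable Y
  measU : Measurable U
  unifU : μ.map U = unif01
  indepU : Indep (MeasurableSpace.comap U inferInstance)
    (MeasurableSpace.comap F inferInstance ⊔ MeasurableSpace.comap Y inferInstance) μ

/-- `F` is auto-calibrated: `F(y) = Q(Y ≤ y | σ(F))` a.s. for every `y`. -/
def AutoCalibrated (μ : Measure Ω) (F : Ω → Measure ℝ) (Y : Ω → ℝ) : Prop :=
  ∀ y : ℝ, (fun ω => cdfAt (F ω) y)
    =ᵐ[μ] μ[Set.indicator {ω | Y ω ≤ y} (fun _ => (1:ℝ)) | MeasurableSpace.comap F inferInstance]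

/-- `F` is probabilistically calibrated: the PIT is uniform on `[0,1]`. -/
def ProbCalibrated (μ : Measure Ω) (F : Ω → Measure ℝ) (Y U : Ω → ℝ) : Prop :=
  μ.map (PIT F Y U) = unif01

/-- `F` is marginally calibrated: `E[F(y)] = Q(Y ≤ y)` for every `y`. -/
def MargCalibrated (μ : Measure Ω) (F : Ω → Measure ℝ) (Y : Ω → ℝ) : Prop :=
  ∀ y : ℝ, ∫ ω, cdfAt (F ω) y ∂μ = (μ {ω | Y ω ≤ y}).toReal

/-- `F` is CEP calibrated: `Q(Z_F ≤ α | q_α^-(F)) = α` a.s. for every `α ∈ (0,1)`. -/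
def CEPCalibrated (μ : Measure Ω) (F : Ω → Measure ℝ) (Y U : Ω → ℝ) : Prop :=
  ∀ α ∈ Set.Ioo (0:ℝ) 1,
    μ[Set.indicator {ω | PIT F Y U ω ≤ α} (fun _ => (1:ℝ)) |
      MeasurableSpace.comap (fun ω => lowerQuantile (F ω) α) inferInstance]
      =ᵐ[μ] fun _ => α

/-- `F` is threshold calibrated: `Q(Y ≤ t | F(t)) = F(t)` a.s. for every `t`. -/
def ThreshCalibrated (μ : Measure Ω) (F : Ω → Measure ℝ) (Y : Ω → ℝ) : Prop :=
  ∀ t : ℝ,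
    μ[Set.indicator {ω | Y ω ≤ t} (fun _ => (1:ℝ)) |
      MeasurableSpace.comap (fun ω => cdfAt (F ω) t) inferInstance]
      =ᵐ[μ] fun ω => cdfAt (F ω) t

/-- An identification function: measurable, increasing and left-continuous in its
first argument. -/
structure IsIdentificationFunction (V : ℝ → ℝ → ℝ) : Prop where
  meas : Measurable (Function.uncurry V)
  mono : ∀ y : ℝ, Monotone fun x => V x y
  leftCont : ∀ y x : ℝ, ContinuousWithinAt (fun x => V x y) (Set.Iic x) x

/-- Lower bound `T^-(G) = sup {x : ∫ V(x,y) dG(y) < 0}` of the functional induced by `V`. -/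
def Tminus (V : ℝ → ℝ → ℝ) (G : Measure ℝ) : ℝ := sSup {x : ℝ | ∫ y, V x y ∂G < 0}

/-- Upper bound `T^+(G) = inf {x : ∫ V(x,y) dG(y) > 0}` of the functional induced by `V`. -/
def Tplus (V : ℝ → ℝ → ℝ) (G : Measure ℝ) : ℝ := sInf {x : ℝ | 0 < ∫ y, V x y ∂G}

/-- `V` is of prediction error form `V(x,y) = v(x−y)`. -/
def PredErrorForm (V : ℝ → ℝ → ℝ) : Prop :=
  ∃ v : ℝ → ℝ, Monotone v ∧ (∀ x : ℝ, ContinuousWithinAt v (Set.Iic x) x) ∧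
    (∃ r : ℝ, 0 < r ∧ v (-r) < 0 ∧ 0 < v r) ∧ ∀ x y : ℝ, V x y = v (x - y)

/-- `V` is of the form `V(x,y) = x − T(δ_y)` for a singleton-valued functional `T`. -/
def DiracSingletonForm (V : ℝ → ℝ → ℝ) : Prop :=
  (∀ y : ℝ, Tminus V (Measure.dirac y) = Tplus V (Measure.dirac y)) ∧
  ∀ x y : ℝ, V x y = x - Tminus V (Measure.dirac y)

/-- Assumption (V): `V` induces the functional on a convex class `𝓕₀ ⊇ 𝓕` of probability
measures containing all Dirac measures, and `V` is of prediction error form or of the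
form `V(x,y) = x − T(δ_y)` for a singleton-valued `T`. -/
structure AssumptionV (V : ℝ → ℝ → ℝ) (𝓕 : Set (Measure ℝ)) : Prop where
  inducing : ∃ 𝓕₀ : Set (Measure ℝ), 𝓕 ⊆ 𝓕₀ ∧ (∀ G ∈ 𝓕₀, IsProbabilityMeasure G) ∧
    (∀ y : ℝ, Measure.dirac y ∈ 𝓕₀) ∧
    (∀ G₁ ∈ 𝓕₀, ∀ G₂ ∈ 𝓕₀, ∀ p : ℝ, 0 ≤ p → p ≤ 1 →
      ENNReal.ofReal p • G₁ + ENNReal.ofReal (1 - p) • G₂ ∈ 𝓕₀) ∧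
    ∀ G ∈ 𝓕₀, ∀ x : ℝ, Integrable (fun y => V x y) G
  form : PredErrorForm V ∨ DiracSingletonForm V

/-- The pair `(T^-(F), T^+(F))` of the interval-valued functional applied to the
random predictive distribution. -/
def TpairOf (V : ℝ → ℝ → ℝ) (F : Ω → Measure ℝ) (ω : Ω) : ℝ × ℝ :=
  (Tminus V (F ω), Tplus V (F ω))

/-- Conditional `T`-calibration of the predictive distribution `F`:
`T(L(Y | T(F))) = T(F)` almost surely. -/
def CondTCalibrated (μ : Measure Ω) [IsFiniteMeasure μ] (V : ℝ → ℝ → ℝ)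
    (F : Ω → Measure ℝ) (Y : Ω → ℝ) : Prop :=
  ∀ᵐ ω ∂μ,
    Tminus V (condDistrib Y (TpairOf V F) μ (TpairOf V F ω)) = Tminus V (F ω) ∧
    Tplus V (condDistrib Y (TpairOf V F) μ (TpairOf V F ω)) = Tplus V (F ω)

/-- Unconditional `T`-calibration of the predictive distribution `F`. -/
def UncondTCalibrated (μ : Measure Ω) (V : ℝ → ℝ → ℝ)
    (F : Ω → Measure ℝ) (Y : Ω → ℝ) : Prop :=
  ∀ ε : ℝ, 0 < ε →
    (∫ ω, V (Tplus V (F ω) - ε) (Y ω) ∂μ) ≤ 0 ∧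
    0 ≤ ∫ ω, V (Tminus V (F ω) + ε) (Y ω) ∂μ

/-- Unconditional `T`-calibration of a single-valued point forecast `X`. -/
def UncondCalibratedPt (μ : Measure Ω) (V : ℝ → ℝ → ℝ) (X Y : Ω → ℝ) : Prop :=
  ∀ ε : ℝ, 0 < ε →
    (∫ ω, V (X ω - ε) (Y ω) ∂μ) ≤ 0 ∧ 0 ≤ ∫ ω, V (X ω + ε) (Y ω) ∂μ

/-- The sets defining `T^-(G)` and `T^+(G)` are nonempty and bounded, so that the induced
functional is well defined and finite at `G`. -/
def TWellDefined (V : ℝ → ℝ → ℝ) (G : Measure ℝ) : Prop :=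
  {x : ℝ | ∫ y, V x y ∂G < 0}.Nonempty ∧ BddAbove {x : ℝ | ∫ y, V x y ∂G < 0} ∧
  {x : ℝ | 0 < ∫ y, V x y ∂G}.Nonempty ∧ BddBelow {x : ℝ | 0 < ∫ y, V x y ∂G}

/-- The elementary loss `S_η(x,y) = (1{η ≤ x} − 1{η ≤ y}) V(η,y)`. -/
def elemLoss (V : ℝ → ℝ → ℝ) (η x y : ℝ) : ℝ :=
  ((if η ≤ x then (1:ℝ) else 0) - if η ≤ y then (1:ℝ) else 0) * V η y

/-- `S` has mixture (Choquet) form with respect to the identification function `V`. -/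
def MixtureForm (V S : ℝ → ℝ → ℝ) : Prop :=
  ∃ H : Measure ℝ, IsLocallyFiniteMeasure H ∧
    ∀ x y : ℝ, S x y = ∫ η, elemLoss V η x y ∂H

/-- `S` is a canonical loss for the functional induced by `V`. -/
def IsCanonicalLoss (V S : ℝ → ℝ → ℝ) : Prop :=
  (∀ x y : ℝ, 0 ≤ S x y) ∧
  ∃ a : ℝ, 0 < a ∧ ∃ b : ℝ → ℝ, Measurable b ∧
    ∀ x y : ℝ, S x y = a * (∫ η, elemLoss V η x y) + b y

/-- `S` is a consistent scoring function for the functional induced by `V` on the class `𝓕`. -/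
def ConsistentFor (S V : ℝ → ℝ → ℝ) (𝓕 : Set (Measure ℝ)) : Prop :=
  ∀ G ∈ 𝓕, ∀ t ∈ Set.Icc (Tminus V G) (Tplus V G), ∀ x : ℝ,
    ∫ y, S t y ∂G ≤ ∫ y, S x y ∂G

/-- `S` is a strictly consistent scoring function for the functional induced by `V` on `𝓕`. -/
def StrictlyConsistentFor (S V : ℝ → ℝ → ℝ) (𝓕 : Set (Measure ℝ)) : Prop :=
  ConsistentFor S V 𝓕 ∧
  ∀ G ∈ 𝓕, ∀ t ∈ Set.Icc (Tminus V G) (Tplus V G), ∀ x : ℝ,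
    x ∉ Set.Icc (Tminus V G) (Tplus V G) → ∫ y, S t y ∂G < ∫ y, S x y ∂G

/-- The empirical distribution of the outcomes `y i`, `i ∈ s`. -/
def empOn {n : ℕ} (y : Fin n → ℝ) (s : Finset (Fin n)) : Measure ℝ :=
  (s.card : ENNReal)⁻¹ • ∑ i ∈ s, Measure.dirac (y i)

/-- A locally bounded real function of a real variable. -/
def LocallyBdd (f : ℝ → ℝ) : Prop :=
  ∀ η₀ : ℝ, ∃ ε : ℝ, 0 < ε ∧ ∃ C : ℝ, ∀ η : ℝ, |η - η₀| < ε → |f η| ≤ C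

/-- All CDFs in the class `𝓕` are continuous and strictly increasing on a shared
support interval. -/
def CSI (𝓕 : Set (Measure ℝ)) : Prop :=
  ∃ S : Set ℝ, S.Nonempty ∧ S.OrdConnected ∧ ∀ G ∈ 𝓕,
    Continuous (cdfAt G) ∧ StrictMonoOn (cdfAt G) S ∧ G Sᶜ = 0

/-- The conditioning variable for quantile calibration at level `α`: the interval of
`α`-quantiles, represented by its endpoints. -/
def qPairOf (F : Ω → Measure ℝ) (α : ℝ) (ω : Ω) : ℝ × ℝ :=
  (lowerQuantile (F ω) α, upperQuantile (F ω) α)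

/-- `F` is quantile calibrated: for every `α ∈ (0,1)`,
`q_α(L(Y | q_α(F))) = q_α(F)` almost surely. -/
def QuantileCalibrated (μ : Measure Ω) [IsFiniteMeasure μ]
    (F : Ω → Measure ℝ) (Y : Ω → ℝ) : Prop :=
  ∀ α ∈ Set.Ioo (0:ℝ) 1, ∀ᵐ ω ∂μ,
    lowerQuantile (condDistrib Y (qPairOf F α) μ (qPairOf F α ω)) α
      = lowerQuantile (F ω) α ∧
    upperQuantile (condDistrib Y (qPairOf F α) μ (qPairOf F α ω)) α
      = upperQuantile (F ω) α

/-!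
A fair coin `b` selects the forecast `G_b` and the law `H_b` of the outcome; all four are
piecewise uniform on the quarters of `[0, 1]`, with densities `(1, 1/2, 3/2, 1)` and
`(1, 3/2, 1/2, 1)` for `G_true` and `G_false`, and `(3/2, 1/2, 3/2, 1/2)` and
`(1/2, 3/2, 1/2, 3/2)` for `H_true` and `H_false`. Both pairs average to the uniform density,
which gives marginal calibration. Given the coin, the PIT `G_b(Y)` has the piecewise linear CDF
`H_b ∘ G_b⁻¹`, and on each piece of `[0, 1]` cut at `1/4, 3/8, 5/8, 3/4` the slopes of the two
add up to `2`, which gives probabilistic calibration. But `G_true(3/8) = 5/16` differs from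
`G_false(3/8) = 7/16`, so `F(3/8)` reveals the coin, whereas `H_true(3/8) = 7/16`: on the event
`F(3/8) = 5/16` the outcome falls below `3/8` with probability `7/16`, not `5/16`.
-/

open Set
open scoped ENNReal

section Cdf

variable {G : Measure ℝ}

lemma cdfLt_eq_cdfAt [NullSingletonClass G] (y : ℝ) : cdfLt G y = cdfAt G y := by
  rw [cdfLt, cdfAt, measure_congr Iio_ae_eq_Iic]

lemma cdfAt_eq_cdf [IsProbabilityMeasure G] : cdfAt G = cdf G := by
  ext y
  rw [cdf_eq_real, cdfAt, measureReal_def]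

lemma measurable_cdfAt [IsProbabilityMeasure G] : Measurable (cdfAt G) := by
  rw [cdfAt_eq_cdf]
  exact (cdf G).mono.measurable

lemma measurable_cdfAt_apply (t : ℝ) : Measurable fun ν : Measure ℝ => cdfAt ν t :=
  (Measure.measurable_coe measurableSet_Iic).ennreal_toReal

lemma setOf_cdfAt_le_of_neg {a : ℝ} (ha : a < 0) : {y | cdfAt G y ≤ a} = ∅ :=
  eq_empty_of_forall_notMem fun _ hy => (ENNReal.toReal_nonneg.trans hy).not_gt ha

lemma setOf_cdfAt_le_of_one_le [IsProbabilityMeasure G] {a : ℝ} (ha : 1 ≤ a) :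
    {y | cdfAt G y ≤ a} = univ :=
  eq_univ_of_forall fun y => by
    change cdfAt G y ≤ a
    rw [cdfAt_eq_cdf]
    exact (cdf_le_one G y).trans ha

lemma PIT_eq_cdfAt {α : Type*} {F : α → Measure ℝ} [∀ ω, NullSingletonClass (F ω)] (Y U : α → ℝ) :
    PIT F Y U = fun ω => cdfAt (F ω) (Y ω) := by
  ext ω
  simp only [PIT, cdfLt_eq_cdfAt, sub_self, mul_zero, add_zero]

lemma setOf_le_eq_Iic {Φ : ℝ → ℝ} (hΦ : Monotone Φ) {s : ℝ} (hs : ∀ y, s < y → Φ s < Φ y) :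
    {y | Φ y ≤ Φ s} = Iic s := by
  ext y
  exact ⟨fun hy => not_lt.1 fun h => (hs y h).not_ge hy, fun hy => hΦ hy⟩

end Cdf

lemma comap_comp_le_comap {α β γ : Type*} [MeasurableSpace β] [MeasurableSpace γ] {h : α → β}
    {g : β → γ} (hg : Measurable g) :
    MeasurableSpace.comap (g ∘ h) inferInstance ≤ MeasurableSpace.comap h inferInstance :=
  MeasurableSpace.comap_comp.symm.le.trans (MeasurableSpace.comap_mono hg.comap_le)

lemma Iic_inter_Icc_eq (t a b : ℝ) : Iic t ∩ Icc a b = Icc a (min t b) := by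
  ext y
  simp only [mem_inter_iff, mem_Iic, mem_Icc, le_min_iff]
  tauto

instance : IsProbabilityMeasure unif01 := by
  constructor
  rw [unif01, Measure.restrict_apply_univ, Real.volume_Icc, sub_zero, ENNReal.ofReal_one]

lemma unif01_Iic (a : ℝ) : unif01 (Iic a) = ENNReal.ofReal (min a 1) := by
  rw [unif01, Measure.restrict_apply measurableSet_Iic, Iic_inter_Icc_eq, Real.volume_Icc, sub_zero]

lemma setIntegral_eq_measureReal_of_ae_eq_condExp {α : Type*} {m m₀ : MeasurableSpace α}
    {μ : Measure α} [IsFiniteMeasure μ] (hm : m ≤ m₀) {f : α → ℝ} {A B : Set α}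
    (hA : MeasurableSet[m] A) (hB : MeasurableSet B)
    (hf : f =ᵐ[μ] μ[B.indicator (fun _ => (1 : ℝ)) | m]) :
    ∫ ω in A, f ω ∂μ = μ.real (B ∩ A) := by
  calc ∫ ω in A, f ω ∂μ = ∫ ω in A, (μ[B.indicator (fun _ => (1 : ℝ)) | m]) ω ∂μ :=
        setIntegral_congr_ae (hm A hA) (hf.mono fun _ h _ => h)
    _ = ∫ ω in A, B.indicator (fun _ => (1 : ℝ)) ω ∂μ :=
        setIntegral_condExp hm ((integrable_const 1).indicator hB) hA
    _ = μ.real (B ∩ A) := by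
        rw [← Pi.one_def, integral_indicator_one hB, measureReal_restrict_apply hB]

namespace CoinSpace

-- A sample point `((b, y), u)` carries a fair coin `b`, the outcome `y ∼ H b` and the
-- randomization `u ∼ unif01`; the forecast is `G b`.
def law (H : Bool → Measure ℝ) : Measure (Bool × ℝ) :=
  (2⁻¹ : ℝ≥0∞) • (H true).map (Prod.mk true) + (2⁻¹ : ℝ≥0∞) • (H false).map (Prod.mk false)

def measure (H : Bool → Measure ℝ) : Measure ((Bool × ℝ) × ℝ) := (law H).prod unif01

def forecast (G : Bool → Measure ℝ) (ω : (Bool × ℝ) × ℝ) : Measure ℝ := G ω.1.1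

def outcome (ω : (Bool × ℝ) × ℝ) : ℝ := ω.1.2

def randomizer (ω : (Bool × ℝ) × ℝ) : ℝ := ω.2

variable {G H : Bool → Measure ℝ}

lemma measurable_forecast : Measurable (forecast G) :=
  (measurable_from_top (f := G)).comp measurable_fst.fst

lemma law_apply {s : Set (Bool × ℝ)} (hs : MeasurableSet s) :
    law H s = 2⁻¹ * H true (Prod.mk true ⁻¹' s) + 2⁻¹ * H false (Prod.mk false ⁻¹' s) := by
  simp only [law, Measure.add_apply, Measure.smul_apply, smul_eq_mul,
    Measure.map_apply measurable_prodMk_left hs]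

lemma measure_fst_preimage {s : Set (Bool × ℝ)} (hs : MeasurableSet s) :
    measure H (Prod.fst ⁻¹' s) = law H s := by
  rw [← Measure.map_apply measurable_fst hs, measure, Measure.map_fst_prod, measure_univ,
    one_smul]

lemma measure_outcome_le_inter_coin_true (t : ℝ) :
    measure H ({ω | outcome ω ≤ t} ∩ {ω | ω.1.1 = true}) = 2⁻¹ * H true (Iic t) := by
  have hs : MeasurableSet {p : Bool × ℝ | p.2 ≤ t ∧ p.1 = true} :=
    (measurable_snd measurableSet_Iic).inter (measurable_fst (measurableSet_singleton true))
  change measure H (Prod.fst ⁻¹' {p : Bool × ℝ | p.2 ≤ t ∧ p.1 = true}) = _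
  rw [measure_fst_preimage hs, law_apply hs]
  simp [Iic]

lemma measure_outcome_le (t : ℝ) :
    measure H {ω | outcome ω ≤ t} = 2⁻¹ * H true (Iic t) + 2⁻¹ * H false (Iic t) := by
  have hs : MeasurableSet {p : Bool × ℝ | p.2 ≤ t} := measurable_snd measurableSet_Iic
  change measure H (Prod.fst ⁻¹' {p : Bool × ℝ | p.2 ≤ t}) = _
  rw [measure_fst_preimage hs, law_apply hs]
  rfl

variable [∀ b, IsProbabilityMeasure (H b)]

instance : IsProbabilityMeasure (law H) := by
  constructor
  rw [law_apply MeasurableSet.univ, preimage_univ, preimage_univ, measure_univ, measure_univ,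
    mul_one, ENNReal.inv_two_add_inv_two]

instance : IsProbabilityMeasure (measure H) := by
  rw [measure]
  infer_instance

lemma measure_coin_eq (b : Bool) : measure H {ω | ω.1.1 = b} = 2⁻¹ := by
  have hs : MeasurableSet {p : Bool × ℝ | p.1 = b} := measurable_fst (measurableSet_singleton b)
  change measure H (Prod.fst ⁻¹' {p : Bool × ℝ | p.1 = b}) = 2⁻¹
  rw [measure_fst_preimage hs, law_apply hs]
  cases b <;> simp

lemma integral_comp_coin (g : Bool → ℝ) :
    ∫ ω, g ω.1.1 ∂measure H = 2⁻¹ * g true + 2⁻¹ * g false := by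
  have hcoin : Measurable fun ω : (Bool × ℝ) × ℝ => ω.1.1 := measurable_fst.fst
  rw [← integral_map hcoin.aemeasurable .of_discrete, integral_fintype .of_finite,
    Fintype.sum_bool]
  simp only [measureReal_def, Measure.map_apply hcoin (measurableSet_singleton _),
    preimage, mem_singleton_iff, measure_coin_eq, smul_eq_mul, ENNReal.toReal_inv,
    ENNReal.toReal_ofNat]

theorem isPredictionSpace [∀ b, IsProbabilityMeasure (G b)] :
    IsPredictionSpace (measure H) (forecast G) outcome randomizer where
  isProb := inferInstance
  probF ω := inferInstanceAs (IsProbabilityMeasure (G ω.1.1))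
  measF := measurable_forecast
  measY := measurable_fst.snd
  measU := measurable_snd
  unifU := by
    change (measure H).map Prod.snd = unif01
    rw [measure, Measure.map_snd_prod, measure_univ, one_smul]
  indepU := by
    have hfst : MeasurableSpace.comap (forecast G) inferInstance ⊔
        MeasurableSpace.comap outcome inferInstance ≤
        MeasurableSpace.comap (Prod.fst : (Bool × ℝ) × ℝ → Bool × ℝ) inferInstance :=
      sup_le (comap_comp_le_comap (measurable_from_top.comp measurable_fst))
        (comap_comp_le_comap measurable_snd)
    exact indep_of_indep_of_le_right
      ((IndepFun_iff_Indep _ _ _).1 (indepFun_prod measurable_id measurable_id)).symm hfst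

theorem margCalibrated
    (h : ∀ y, cdfAt (G true) y + cdfAt (G false) y = cdfAt (H true) y + cdfAt (H false) y) :
    MargCalibrated (measure H) (forecast G) outcome := by
  intro y
  rw [measure_outcome_le, ENNReal.toReal_add (by finiteness) (by finiteness), ENNReal.toReal_mul,
    ENNReal.toReal_mul]
  refine (integral_comp_coin fun b => cdfAt (G b) y).trans ?_
  have hy := h y
  simp only [cdfAt, ENNReal.toReal_inv, ENNReal.toReal_ofNat] at hy ⊢
  linarith

theorem probCalibrated [∀ b, IsProbabilityMeasure (G b)] [∀ b, NullSingletonClass (G b)]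
    (h : ∀ a ∈ Ico (0 : ℝ) 1,
      (H true).real {y | cdfAt (G true) y ≤ a} + (H false).real {y | cdfAt (G false) y ≤ a}
        = 2 * a) :
    ProbCalibrated (measure H) (forecast G) outcome randomizer := by
  have : ∀ ω, NullSingletonClass (forecast G ω) := fun ω =>
    inferInstanceAs (NullSingletonClass (G ω.1.1))
  let φ : Bool × ℝ → ℝ := fun p => cdfAt (G p.1) p.2
  have hφ : Measurable φ :=
    measurable_from_prod_countable_right fun b => (measurable_cdfAt : Measurable (cdfAt (G b)))
  have hPIT : PIT (forecast G) outcome randomizer = φ ∘ Prod.fst := by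
    rw [PIT_eq_cdfAt]
    rfl
  have : IsProbabilityMeasure ((law H).map φ) := Measure.isProbabilityMeasure_map hφ.aemeasurable
  rw [ProbCalibrated, hPIT, ← Measure.map_map hφ measurable_fst, measure, Measure.map_fst_prod,
    measure_univ, one_smul]
  refine Measure.ext_of_Iic _ _ fun a => ?_
  rw [Measure.map_apply hφ measurableSet_Iic, law_apply (hφ measurableSet_Iic), unif01_Iic]
  change 2⁻¹ * H true {y | cdfAt (G true) y ≤ a} + 2⁻¹ * H false {y | cdfAt (G false) y ≤ a} = _
  rcases lt_or_ge a 0 with ha₀ | ha₀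
  · rw [setOf_cdfAt_le_of_neg ha₀, setOf_cdfAt_le_of_neg ha₀,
      min_eq_left (ha₀.le.trans zero_le_one), ENNReal.ofReal_of_nonpos ha₀.le]
    simp
  rcases lt_or_ge a 1 with ha₁ | ha₁
  · rw [← ofReal_measureReal, ← ofReal_measureReal, ← mul_add,
      ← ENNReal.ofReal_add measureReal_nonneg measureReal_nonneg, h a ⟨ha₀, ha₁⟩,
      min_eq_left ha₁.le, ENNReal.ofReal_mul zero_le_two, ← mul_assoc, ENNReal.ofReal_ofNat,
      ENNReal.inv_mul_cancel two_ne_zero ENNReal.ofNat_ne_top, one_mul]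
  · rw [setOf_cdfAt_le_of_one_le ha₁, setOf_cdfAt_le_of_one_le ha₁, measure_univ, measure_univ,
      mul_one, ENNReal.inv_two_add_inv_two, min_eq_right ha₁, ENNReal.ofReal_one]

lemma not_ae_eq_condExp_comap {β : Type*} [MeasurableSpace β] {X : (Bool × ℝ) × ℝ → β}
    (hX : Measurable X)
    (hA : MeasurableSet[MeasurableSpace.comap X inferInstance] {ω | ω.1.1 = true}) {t : ℝ}
    (hH : cdfAt (H true) t ≠ cdfAt (G true) t) :
    ¬ (fun ω => cdfAt (forecast G ω) t)
      =ᵐ[measure H] (measure H)[{ω | outcome ω ≤ t}.indicator (fun _ => (1 : ℝ)) |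
        MeasurableSpace.comap X inferInstance] := by
  intro h
  have key := setIntegral_eq_measureReal_of_ae_eq_condExp hX.comap_le hA
    (B := {ω | outcome ω ≤ t}) (measurable_fst.snd measurableSet_Iic) h
  rw [setIntegral_congr_fun (hX.comap_le _ hA) (g := fun _ => cdfAt (G true) t)
      (fun ω (hω : ω.1.1 = true) => by simp only [forecast, hω]),
    setIntegral_const, measureReal_def, measure_coin_eq, measureReal_def,
    measure_outcome_le_inter_coin_true, ENNReal.toReal_mul, ← cdfAt, smul_eq_mul] at key
  exact hH (mul_left_cancel₀ (by norm_num) key).symm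

lemma measurableSet_coin_true {t : ℝ} (hG : cdfAt (G true) t ≠ cdfAt (G false) t) :
    MeasurableSet[MeasurableSpace.comap (fun ω => cdfAt (forecast G ω) t) inferInstance]
      {ω | ω.1.1 = true} :=
  ⟨{cdfAt (G true) t}, measurableSet_singleton _, by
    ext ω
    cases hω : ω.1.1 <;> simp [forecast, hω, hG.symm]⟩

theorem not_threshCalibrated {t : ℝ} (hG : cdfAt (G true) t ≠ cdfAt (G false) t)
    (hH : cdfAt (H true) t ≠ cdfAt (G true) t) :
    ¬ ThreshCalibrated (measure H) (forecast G) outcome := fun h =>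
  not_ae_eq_condExp_comap ((measurable_cdfAt_apply t).comp measurable_forecast)
    (measurableSet_coin_true hG) hH (h t).symm

theorem not_autoCalibrated {t : ℝ} (hG : cdfAt (G true) t ≠ cdfAt (G false) t)
    (hH : cdfAt (H true) t ≠ cdfAt (G true) t) :
    ¬ AutoCalibrated (measure H) (forecast G) outcome := fun h =>
  not_ae_eq_condExp_comap measurable_forecast
    (comap_comp_le_comap (measurable_cdfAt_apply t) _ (measurableSet_coin_true hG)) hH (h t)

end CoinSpace

section QuarterBins

lemma min_sub_min_nonneg {a b : ℝ} (t : ℝ) (hab : a ≤ b) : 0 ≤ min t b - min t a :=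
  sub_nonneg.2 (min_le_min le_rfl hab)

lemma min_sub_min_le_min_sub_min {a b x y : ℝ} (hab : a ≤ b) (hxy : x ≤ y) :
    min x b - min x a ≤ min y b - min y a := by
  rcases le_total x a with h₁ | h₁ <;> rcases le_total x b with h₂ | h₂ <;>
    rcases le_total y a with h₃ | h₃ <;> rcases le_total y b with h₄ | h₄ <;>
    simp only [min_eq_left, min_eq_right, h₁, h₂, h₃, h₄] <;> linarith

lemma volume_Iic_inter_Icc {a b : ℝ} (t : ℝ) (hab : a ≤ b) :
    volume (Iic t ∩ Icc a b) = ENNReal.ofReal (min t b - min t a) := by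
  rw [Iic_inter_Icc_eq, Real.volume_Icc]
  rcases le_total t a with hta | hta
  · rw [min_eq_left hta, min_eq_left (hta.trans hab), sub_self, ENNReal.ofReal_zero,
      ENNReal.ofReal_of_nonpos (by linarith)]
  · rw [min_eq_right hta]

def quarterCdf (c₁ c₂ c₃ c₄ t : ℝ) : ℝ :=
  c₁ * (min t 4⁻¹ - min t 0) + c₂ * (min t 2⁻¹ - min t 4⁻¹) + c₃ * (min t (3 / 4) - min t 2⁻¹)
    + c₄ * (min t 1 - min t (3 / 4))

def quarterMeasure (c₁ c₂ c₃ c₄ : ℝ) : Measure ℝ :=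
  ENNReal.ofReal c₁ • volume.restrict (Icc 0 4⁻¹)
    + ENNReal.ofReal c₂ • volume.restrict (Icc 4⁻¹ 2⁻¹)
    + ENNReal.ofReal c₃ • volume.restrict (Icc 2⁻¹ (3 / 4))
    + ENNReal.ofReal c₄ • volume.restrict (Icc (3 / 4) 1)

variable {c₁ c₂ c₃ c₄ : ℝ}

lemma continuous_quarterCdf : Continuous (quarterCdf c₁ c₂ c₃ c₄) := by
  unfold quarterCdf
  fun_prop

lemma quarterCdf_nonneg (h₁ : 0 ≤ c₁) (h₂ : 0 ≤ c₂) (h₃ : 0 ≤ c₃) (h₄ : 0 ≤ c₄) (t : ℝ) :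
    0 ≤ quarterCdf c₁ c₂ c₃ c₄ t := by
  have d₁ := min_sub_min_nonneg t (show (0 : ℝ) ≤ 4⁻¹ by norm_num)
  have d₂ := min_sub_min_nonneg t (show (4 : ℝ)⁻¹ ≤ 2⁻¹ by norm_num)
  have d₃ := min_sub_min_nonneg t (show (2 : ℝ)⁻¹ ≤ 3 / 4 by norm_num)
  have d₄ := min_sub_min_nonneg t (show (3 / 4 : ℝ) ≤ 1 by norm_num)
  unfold quarterCdf
  positivity

lemma monotone_quarterCdf (h₁ : 0 ≤ c₁) (h₂ : 0 ≤ c₂) (h₃ : 0 ≤ c₃) (h₄ : 0 ≤ c₄) :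
    Monotone (quarterCdf c₁ c₂ c₃ c₄) := by
  intro x y hxy
  have d₁ := min_sub_min_le_min_sub_min (show (0 : ℝ) ≤ 4⁻¹ by norm_num) hxy
  have d₂ := min_sub_min_le_min_sub_min (show (4 : ℝ)⁻¹ ≤ 2⁻¹ by norm_num) hxy
  have d₃ := min_sub_min_le_min_sub_min (show (2 : ℝ)⁻¹ ≤ 3 / 4 by norm_num) hxy
  have d₄ := min_sub_min_le_min_sub_min (show (3 / 4 : ℝ) ≤ 1 by norm_num) hxy
  unfold quarterCdf
  nlinarith [mul_le_mul_of_nonneg_left d₁ h₁, mul_le_mul_of_nonneg_left d₂ h₂,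
    mul_le_mul_of_nonneg_left d₃ h₃, mul_le_mul_of_nonneg_left d₄ h₄]

lemma strictMonoOn_quarterCdf (h₁ : 0 < c₁) (h₂ : 0 < c₂) (h₃ : 0 < c₃) (h₄ : 0 < c₄) :
    StrictMonoOn (quarterCdf c₁ c₂ c₃ c₄) (Icc 0 1) := by
  intro x hx y hy hxy
  have d₁ := sub_nonneg.2 (min_sub_min_le_min_sub_min (show (0 : ℝ) ≤ 4⁻¹ by norm_num) hxy.le)
  have d₂ := sub_nonneg.2 (min_sub_min_le_min_sub_min (show (4 : ℝ)⁻¹ ≤ 2⁻¹ by norm_num) hxy.le)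
  have d₃ := sub_nonneg.2 (min_sub_min_le_min_sub_min (show (2 : ℝ)⁻¹ ≤ 3 / 4 by norm_num) hxy.le)
  have d₄ := sub_nonneg.2 (min_sub_min_le_min_sub_min (show (3 / 4 : ℝ) ≤ 1 by norm_num) hxy.le)
  have htotal : min y 1 - min y 0 - (min x 1 - min x 0) = y - x := by
    rw [min_eq_left hx.2, min_eq_left hy.2, min_eq_right hx.1, min_eq_right hy.1]
    ring
  -- the slope of the CDF is at least the smallest density `m`
  set m := min (min c₁ c₂) (min c₃ c₄)
  have hm : 0 < m := lt_min (lt_min h₁ h₂) (lt_min h₃ h₄)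
  have m₁ : m ≤ c₁ := (min_le_left _ _).trans (min_le_left _ _)
  have m₂ : m ≤ c₂ := (min_le_left _ _).trans (min_le_right _ _)
  have m₃ : m ≤ c₃ := (min_le_right _ _).trans (min_le_left _ _)
  have m₄ : m ≤ c₄ := (min_le_right _ _).trans (min_le_right _ _)
  unfold quarterCdf
  nlinarith [mul_nonneg (sub_nonneg.2 m₁) d₁, mul_nonneg (sub_nonneg.2 m₂) d₂,
    mul_nonneg (sub_nonneg.2 m₃) d₃, mul_nonneg (sub_nonneg.2 m₄) d₄,
    mul_pos hm (sub_pos.2 hxy), congrArg (m * ·) htotal]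

lemma quarterCdf_lt_quarterCdf (h₁ : 0 < c₁) (h₂ : 0 < c₂) (h₃ : 0 < c₃) (h₄ : 0 < c₄)
    {s y : ℝ} (hs : s ∈ Ico 0 1) (hsy : s < y) :
    quarterCdf c₁ c₂ c₃ c₄ s < quarterCdf c₁ c₂ c₃ c₄ y :=
  calc quarterCdf c₁ c₂ c₃ c₄ s < quarterCdf c₁ c₂ c₃ c₄ (min y 1) :=
        strictMonoOn_quarterCdf h₁ h₂ h₃ h₄ (Ico_subset_Icc_self hs)
          ⟨hs.1.trans (le_min hsy.le hs.2.le), min_le_right _ _⟩ (lt_min hsy hs.2)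
    _ ≤ quarterCdf c₁ c₂ c₃ c₄ y :=
        monotone_quarterCdf h₁.le h₂.le h₃.le h₄.le (min_le_left _ _)

lemma quarterCdf_of_le_quarter {t : ℝ} (h₀ : 0 ≤ t) (h₁ : t ≤ 4⁻¹) :
    quarterCdf c₁ c₂ c₃ c₄ t = c₁ * t := by
  rw [quarterCdf, min_eq_left h₁, min_eq_right h₀, min_eq_left (by linarith : t ≤ 2⁻¹),
    min_eq_left (by linarith : t ≤ 3 / 4), min_eq_left (by linarith : t ≤ 1)]
  ring

lemma quarterCdf_of_le_half {t : ℝ} (h₀ : 4⁻¹ ≤ t) (h₁ : t ≤ 2⁻¹) :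
    quarterCdf c₁ c₂ c₃ c₄ t = c₁ / 4 + c₂ * (t - 4⁻¹) := by
  rw [quarterCdf, min_eq_right h₀, min_eq_right (by linarith : (0 : ℝ) ≤ t), min_eq_left h₁,
    min_eq_left (by linarith : t ≤ 3 / 4), min_eq_left (by linarith : t ≤ 1)]
  ring

lemma quarterCdf_of_le_three_quarters {t : ℝ} (h₀ : 2⁻¹ ≤ t) (h₁ : t ≤ 3 / 4) :
    quarterCdf c₁ c₂ c₃ c₄ t = (c₁ + c₂) / 4 + c₃ * (t - 2⁻¹) := by
  rw [quarterCdf, min_eq_right (by linarith : (4 : ℝ)⁻¹ ≤ t),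
    min_eq_right (by linarith : (0 : ℝ) ≤ t),
    min_eq_right h₀, min_eq_left h₁, min_eq_left (by linarith : t ≤ 1)]
  ring

lemma quarterCdf_of_le_one {t : ℝ} (h₀ : 3 / 4 ≤ t) (h₁ : t ≤ 1) :
    quarterCdf c₁ c₂ c₃ c₄ t = (c₁ + c₂ + c₃) / 4 + c₄ * (t - 3 / 4) := by
  rw [quarterCdf, min_eq_right (by linarith : (4 : ℝ)⁻¹ ≤ t),
    min_eq_right (by linarith : (0 : ℝ) ≤ t),
    min_eq_right (by linarith : (2 : ℝ)⁻¹ ≤ t), min_eq_right h₀, min_eq_left h₁]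
  ring

lemma quarterMeasure_Iic (h₁ : 0 ≤ c₁) (h₂ : 0 ≤ c₂) (h₃ : 0 ≤ c₃) (h₄ : 0 ≤ c₄) (t : ℝ) :
    quarterMeasure c₁ c₂ c₃ c₄ (Iic t) = ENNReal.ofReal (quarterCdf c₁ c₂ c₃ c₄ t) := by
  have d₁ := min_sub_min_nonneg t (show (0 : ℝ) ≤ 4⁻¹ by norm_num)
  have d₂ := min_sub_min_nonneg t (show (4 : ℝ)⁻¹ ≤ 2⁻¹ by norm_num)
  have d₃ := min_sub_min_nonneg t (show (2 : ℝ)⁻¹ ≤ 3 / 4 by norm_num)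
  have d₄ := min_sub_min_nonneg t (show (3 / 4 : ℝ) ≤ 1 by norm_num)
  simp only [quarterMeasure, Measure.add_apply, Measure.smul_apply, smul_eq_mul,
    Measure.restrict_apply measurableSet_Iic, volume_Iic_inter_Icc t (by norm_num : (0 : ℝ) ≤ 4⁻¹),
    volume_Iic_inter_Icc t (by norm_num : (4 : ℝ)⁻¹ ≤ 2⁻¹),
    volume_Iic_inter_Icc t (by norm_num : (2 : ℝ)⁻¹ ≤ 3 / 4),
    volume_Iic_inter_Icc t (by norm_num : (3 / 4 : ℝ) ≤ 1)]
  rw [quarterCdf, ENNReal.ofReal_add (by positivity) (by positivity),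
    ENNReal.ofReal_add (by positivity) (by positivity),
    ENNReal.ofReal_add (by positivity) (by positivity), ENNReal.ofReal_mul h₁,
    ENNReal.ofReal_mul h₂, ENNReal.ofReal_mul h₃, ENNReal.ofReal_mul h₄]

lemma cdfAt_quarterMeasure (h₁ : 0 ≤ c₁) (h₂ : 0 ≤ c₂) (h₃ : 0 ≤ c₃) (h₄ : 0 ≤ c₄) :
    cdfAt (quarterMeasure c₁ c₂ c₃ c₄) = quarterCdf c₁ c₂ c₃ c₄ := by
  ext t
  rw [cdfAt, quarterMeasure_Iic h₁ h₂ h₃ h₄,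
    ENNReal.toReal_ofReal (quarterCdf_nonneg h₁ h₂ h₃ h₄ t)]

instance : NullSingletonClass (quarterMeasure c₁ c₂ c₃ c₄) :=
  ⟨fun y => by simp [quarterMeasure]⟩

lemma quarterMeasure_compl_Icc : quarterMeasure c₁ c₂ c₃ c₄ (Icc 0 1)ᶜ = 0 := by
  have hnull {a b : ℝ} (ha : 0 ≤ a) (hb : b ≤ 1) : volume.restrict (Icc a b) (Icc 0 1)ᶜ = 0 := by
    rw [Measure.restrict_apply measurableSet_Icc.compl,
      (disjoint_compl_left.mono_right (Icc_subset_Icc ha hb)).inter_eq, measure_empty]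
  simp only [quarterMeasure, Measure.add_apply, Measure.smul_apply, smul_eq_mul,
    hnull le_rfl (by norm_num : (4 : ℝ)⁻¹ ≤ 1),
    hnull (by norm_num : (0 : ℝ) ≤ 4⁻¹) (by norm_num : (2 : ℝ)⁻¹ ≤ 1),
    hnull (by norm_num : (0 : ℝ) ≤ 2⁻¹) (by norm_num : (3 / 4 : ℝ) ≤ 1),
    hnull (by norm_num : (0 : ℝ) ≤ 3 / 4) le_rfl, mul_zero, add_zero]

lemma isProbabilityMeasure_quarterMeasure (h₁ : 0 ≤ c₁) (h₂ : 0 ≤ c₂) (h₃ : 0 ≤ c₃) (h₄ : 0 ≤ c₄)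
    (hsum : c₁ + c₂ + c₃ + c₄ = 4) : IsProbabilityMeasure (quarterMeasure c₁ c₂ c₃ c₄) := by
  have hsub : Ioi (1 : ℝ) ⊆ (Icc 0 1)ᶜ := fun _ hx h => not_le.2 (mem_Ioi.1 hx) h.2
  have hIoi : quarterMeasure c₁ c₂ c₃ c₄ (Ioi 1) = 0 :=
    measure_mono_null hsub quarterMeasure_compl_Icc
  constructor
  rw [← measure_add_measure_compl measurableSet_Iic, compl_Iic, hIoi, add_zero,
    quarterMeasure_Iic h₁ h₂ h₃ h₄, quarterCdf_of_le_one (by norm_num) le_rfl, ← ENNReal.ofReal_one]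
  congr 1
  linarith

lemma csi_of_forall_eq_quarterMeasure {𝓕 : Set (Measure ℝ)}
    (h𝓕 : ∀ G ∈ 𝓕, ∃ c₁ c₂ c₃ c₄ : ℝ, 0 < c₁ ∧ 0 < c₂ ∧ 0 < c₃ ∧ 0 < c₄ ∧
      G = quarterMeasure c₁ c₂ c₃ c₄) : CSI 𝓕 := by
  refine ⟨Icc 0 1, nonempty_Icc.2 zero_le_one, ordConnected_Icc, fun G hG => ?_⟩
  obtain ⟨c₁, c₂, c₃, c₄, h₁, h₂, h₃, h₄, rfl⟩ := h𝓕 G hG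
  rw [cdfAt_quarterMeasure h₁.le h₂.le h₃.le h₄.le]
  exact ⟨continuous_quarterCdf, strictMonoOn_quarterCdf h₁ h₂ h₃ h₄, quarterMeasure_compl_Icc⟩

end QuarterBins

section Example

def forecastLaw : Bool → Measure ℝ
  | true => quarterMeasure 1 2⁻¹ (3 / 2) 1
  | false => quarterMeasure 1 (3 / 2) 2⁻¹ 1

def outcomeLaw : Bool → Measure ℝ
  | true => quarterMeasure (3 / 2) 2⁻¹ (3 / 2) 2⁻¹
  | false => quarterMeasure 2⁻¹ (3 / 2) 2⁻¹ (3 / 2)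

instance (b : Bool) : IsProbabilityMeasure (forecastLaw b) := by
  cases b <;>
    exact isProbabilityMeasure_quarterMeasure (by norm_num) (by norm_num) (by norm_num)
      (by norm_num) (by norm_num)

instance (b : Bool) : IsProbabilityMeasure (outcomeLaw b) := by
  cases b <;>
    exact isProbabilityMeasure_quarterMeasure (by norm_num) (by norm_num) (by norm_num)
      (by norm_num) (by norm_num)

instance (b : Bool) : NullSingletonClass (forecastLaw b) := by
  cases b <;> dsimp only [forecastLaw] <;> infer_instance

lemma cdfAt_forecastLaw_true : cdfAt (forecastLaw true) = quarterCdf 1 2⁻¹ (3 / 2) 1 :=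
  cdfAt_quarterMeasure (by norm_num) (by norm_num) (by norm_num) (by norm_num)

lemma cdfAt_forecastLaw_false : cdfAt (forecastLaw false) = quarterCdf 1 (3 / 2) 2⁻¹ 1 :=
  cdfAt_quarterMeasure (by norm_num) (by norm_num) (by norm_num) (by norm_num)

lemma cdfAt_outcomeLaw_true : cdfAt (outcomeLaw true) = quarterCdf (3 / 2) 2⁻¹ (3 / 2) 2⁻¹ :=
  cdfAt_quarterMeasure (by norm_num) (by norm_num) (by norm_num) (by norm_num)

lemma cdfAt_outcomeLaw_false : cdfAt (outcomeLaw false) = quarterCdf 2⁻¹ (3 / 2) 2⁻¹ (3 / 2) :=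
  cdfAt_quarterMeasure (by norm_num) (by norm_num) (by norm_num) (by norm_num)

lemma csi_range_forecastLaw : CSI (range forecastLaw) := by
  refine csi_of_forall_eq_quarterMeasure ?_
  rintro _ ⟨_ | _, rfl⟩
  · exact ⟨1, 3 / 2, 2⁻¹, 1, by norm_num, by norm_num, by norm_num, by norm_num, rfl⟩
  · exact ⟨1, 2⁻¹, 3 / 2, 1, by norm_num, by norm_num, by norm_num, by norm_num, rfl⟩

lemma cdfAt_forecastLaw_add_eq_cdfAt_outcomeLaw_add (y : ℝ) :
    cdfAt (forecastLaw true) y + cdfAt (forecastLaw false) y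
      = cdfAt (outcomeLaw true) y + cdfAt (outcomeLaw false) y := by
  rw [cdfAt_forecastLaw_true, cdfAt_forecastLaw_false, cdfAt_outcomeLaw_true,
    cdfAt_outcomeLaw_false, quarterCdf, quarterCdf, quarterCdf, quarterCdf]
  ring

/-- `s₁` and `s₂` are the `a`-quantiles of the two forecasts; the case splits at
`a = 1/4, 3/8, 5/8, 3/4` are the images of the bin edges under the forecast CDFs. -/
lemma exists_forecast_quantiles {a : ℝ} (ha : a ∈ Ico (0 : ℝ) 1) :
    ∃ s₁ ∈ Ico (0 : ℝ) 1, ∃ s₂ ∈ Ico (0 : ℝ) 1,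
      quarterCdf 1 2⁻¹ (3 / 2) 1 s₁ = a ∧ quarterCdf 1 (3 / 2) 2⁻¹ 1 s₂ = a ∧
      quarterCdf (3 / 2) 2⁻¹ (3 / 2) 2⁻¹ s₁ + quarterCdf 2⁻¹ (3 / 2) 2⁻¹ (3 / 2) s₂ = 2 * a := by
  obtain ⟨ha₀, ha₁⟩ := ha
  rcases le_or_gt a 4⁻¹ with r₁ | r₁
  · refine ⟨a, ⟨ha₀, ha₁⟩, a, ⟨ha₀, ha₁⟩, ?_⟩
    simp only [quarterCdf_of_le_quarter ha₀ r₁]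
    exact ⟨by ring, by ring, by ring⟩
  rcases le_or_gt a (3 / 8) with r₂ | r₂
  · refine ⟨2 * a - 4⁻¹, ⟨by linarith, by linarith⟩, 2 * a / 3 + 12⁻¹, ⟨by linarith, by linarith⟩,
      ?_⟩
    simp only [quarterCdf_of_le_half (t := 2 * a - 4⁻¹) (by linarith) (by linarith),
      quarterCdf_of_le_half (t := 2 * a / 3 + 12⁻¹) (by linarith) (by linarith)]
    exact ⟨by ring, by ring, by ring⟩
  rcases le_or_gt a (5 / 8) with r₃ | r₃
  · refine ⟨2 * a / 3 + 4⁻¹, ⟨by linarith, by linarith⟩, 2 * a / 3 + 12⁻¹,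
      ⟨by linarith, by linarith⟩, ?_⟩
    simp only [quarterCdf_of_le_three_quarters (t := 2 * a / 3 + 4⁻¹) (by linarith) (by linarith),
      quarterCdf_of_le_half (t := 2 * a / 3 + 12⁻¹) (by linarith) (by linarith)]
    exact ⟨by ring, by ring, by ring⟩
  rcases le_or_gt a (3 / 4) with r₄ | r₄
  · refine ⟨2 * a / 3 + 4⁻¹, ⟨by linarith, by linarith⟩, 2 * a - 3 / 4,
      ⟨by linarith, by linarith⟩, ?_⟩
    simp only [quarterCdf_of_le_three_quarters (t := 2 * a / 3 + 4⁻¹) (by linarith) (by linarith),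
      quarterCdf_of_le_three_quarters (t := 2 * a - 3 / 4) (by linarith) (by linarith)]
    exact ⟨by ring, by ring, by ring⟩
  · refine ⟨a, ⟨ha₀, ha₁⟩, a, ⟨ha₀, ha₁⟩, ?_⟩
    simp only [quarterCdf_of_le_one r₄.le ha₁.le]
    exact ⟨by ring, by ring, by ring⟩

lemma outcomeLaw_real_setOf_cdfAt_forecastLaw_le {a : ℝ} (ha : a ∈ Ico (0 : ℝ) 1) :
    (outcomeLaw true).real {y | cdfAt (forecastLaw true) y ≤ a}
      + (outcomeLaw false).real {y | cdfAt (forecastLaw false) y ≤ a} = 2 * a := by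
  obtain ⟨s₁, hs₁, s₂, hs₂, h₁, h₂, hsum⟩ := exists_forecast_quantiles ha
  have e₁ : {y | cdfAt (forecastLaw true) y ≤ a} = Iic s₁ := by
    rw [cdfAt_forecastLaw_true, ← h₁]
    exact setOf_le_eq_Iic (monotone_quarterCdf (by norm_num) (by norm_num) (by norm_num)
      (by norm_num)) fun y => quarterCdf_lt_quarterCdf (by norm_num) (by norm_num) (by norm_num)
        (by norm_num) hs₁
  have e₂ : {y | cdfAt (forecastLaw false) y ≤ a} = Iic s₂ := by
    rw [cdfAt_forecastLaw_false, ← h₂]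
    exact setOf_le_eq_Iic (monotone_quarterCdf (by norm_num) (by norm_num) (by norm_num)
      (by norm_num)) fun y => quarterCdf_lt_quarterCdf (by norm_num) (by norm_num) (by norm_num)
        (by norm_num) hs₂
  rw [e₁, e₂, ← hsum, ← cdfAt_outcomeLaw_true, ← cdfAt_outcomeLaw_false]
  rfl

lemma cdfAt_forecastLaw_ne :
    cdfAt (forecastLaw true) (3 / 8) ≠ cdfAt (forecastLaw false) (3 / 8) := by
  rw [cdfAt_forecastLaw_true, cdfAt_forecastLaw_false,
    quarterCdf_of_le_half (by norm_num) (by norm_num),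
    quarterCdf_of_le_half (by norm_num) (by norm_num)]
  norm_num

lemma cdfAt_outcomeLaw_ne : cdfAt (outcomeLaw true) (3 / 8) ≠ cdfAt (forecastLaw true) (3 / 8) := by
  rw [cdfAt_outcomeLaw_true, cdfAt_forecastLaw_true,
    quarterCdf_of_le_half (by norm_num) (by norm_num),
    quarterCdf_of_le_half (by norm_num) (by norm_num)]
  norm_num

end Example

/-- **Theorem (Statement 16).** There is a prediction space in which `F` takes finitely
many values, all continuous strictly increasing CDFs on a shared support interval, such
that `F` is probabilistically and marginally calibrated, yet neither threshold calibrated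
nor auto-calibrated.  In particular, joint probabilistic and marginal calibration does
not imply auto-calibration. -/
theorem exists_prob_marg_not_threshold_not_auto :
    ∃ (Ω : Type) (_ : MeasurableSpace Ω) (μ : Measure Ω) (_ : IsProbabilityMeasure μ)
      (F : Ω → Measure ℝ) (Y U : Ω → ℝ),
      IsPredictionSpace μ F Y U ∧
      (∃ 𝓖 : Finset (Measure ℝ), (∀ ω, F ω ∈ 𝓖) ∧ CSI ↑𝓖) ∧
      ProbCalibrated μ F Y U ∧
      MargCalibrated μ F Y ∧
      ¬ ThreshCalibrated μ F Y ∧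
      ¬ AutoCalibrated μ F Y := by
  classical
  refine ⟨_, _, CoinSpace.measure outcomeLaw, inferInstance, CoinSpace.forecast forecastLaw,
    CoinSpace.outcome, CoinSpace.randomizer, CoinSpace.isPredictionSpace,
    ⟨Finset.univ.image forecastLaw, fun ω => Finset.mem_image_of_mem _ (Finset.mem_univ _), ?_⟩,
    CoinSpace.probCalibrated fun _ => outcomeLaw_real_setOf_cdfAt_forecastLaw_le,
    CoinSpace.margCalibrated cdfAt_forecastLaw_add_eq_cdfAt_outcomeLaw_add,
    CoinSpace.not_threshCalibrated cdfAt_forecastLaw_ne cdfAt_outcomeLaw_ne,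
    CoinSpace.not_autoCalibrated cdfAt_forecastLaw_ne cdfAt_outcomeLaw_ne⟩
  rw [Finset.coe_image, Finset.coe_univ, image_univ]
  exact csi_range_forecastLaw

end
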